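/- arXiv:2304.10225 — 6 statements merged into one kernel-verified Lean document; each statement's English description precedes it below -/
import Mathlib

section
/- Let m₁, m₂, m₃, m₄ > 0 and define α(x) = m₁/(1 + exp(-m₂·x)) and β(x) = m₃/(1 + exp(-m₄·x)). Let S, I, R : [0, ∞) → ℝ be differentiable functions satisfying S' = -α(I)·I·S, I' = α(I)·I·S - β(I)·I, R' = β(I)·I on [0, ∞), with S(0) > 0, I(0) > 0, R(0) = 0, S(0) + I(0) + R(0) = 1, and m₁·S(0) > 2·m₃. Then there exists a finite time t > 0 such that I'(t) = 0. -/
set_option maxHeartbeats 1000000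

open Real Set

lemma sig_lb (m k x : ℝ) (hm : 0 ≤ m) (hk : 0 < k) (hx : 0 ≤ x) :
    m / 2 ≤ m / (1 + Real.exp (-k * x)) := by
  have h1 : Real.exp (-k * x) ≤ 1 := Real.exp_le_one_iff.mpr (by nlinarith)
  have h2 : (0:ℝ) < 1 + Real.exp (-k * x) := by positivity
  gcongr
  linarith

lemma sig_ub (m k x : ℝ) (hm : 0 ≤ m) :
    m / (1 + Real.exp (-k * x)) ≤ m := by
  have h := Real.exp_pos (-k * x)
  calc m / (1 + Real.exp (-k * x)) ≤ m / 1 := by gcongr; linarith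
    _ = m := by simp

/-- Finiteness of the transition time (Lemma 3.3): for the rescaled trend cycle model
with sigmoid adoption/rejection rates, δ = 0 and ℓ_α = ℓ_β = 0, if S(0), I(0) > 0,
R(0) = 0, S(0) + I(0) + R(0) = 1 and m₁·S(0) > 2·m₃, then there is a finite time
t > 0 at which I'(t) = 0. -/
theorem transition_time_finite (m₁ m₂ m₃ m₄ : ℝ)
    (hm1 : 0 < m₁) (hm2 : 0 < m₂) (hm3 : 0 < m₃) (hm4 : 0 < m₄)
    (α β : ℝ → ℝ)
    (hα : ∀ x, α x = m₁ / (1 + Real.exp (-m₂ * x)))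
    (hβ : ∀ x, β x = m₃ / (1 + Real.exp (-m₄ * x)))
    (S I R : ℝ → ℝ)
    (hS : ∀ t ≥ (0:ℝ), HasDerivAt S (-(α (I t)) * I t * S t) t)
    (hI : ∀ t ≥ (0:ℝ), HasDerivAt I (α (I t) * I t * S t - β (I t) * I t) t)
    (hR : ∀ t ≥ (0:ℝ), HasDerivAt R (β (I t) * I t) t)
    (hS0 : 0 < S 0) (hI0 : 0 < I 0) (hR0 : R 0 = 0)
    (hsum : S 0 + I 0 + R 0 = 1)
    (hcond : m₁ * S 0 > 2 * m₃) :
    ∃ t > (0:ℝ), deriv I t = 0 := by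
  by_contra hcon
  push_neg at hcon
  set f : ℝ → ℝ := fun t => α (I t) * I t * S t - β (I t) * I t with hf
  have hderiv : ∀ t ≥ (0:ℝ), deriv I t = f t := fun t ht => (hI t ht).deriv
  -- continuity
  have contI : ContinuousOn I (Ici 0) := fun t ht => (hI t ht).continuousAt.continuousWithinAt
  have contS : ContinuousOn S (Ici 0) := fun t ht => (hS t ht).continuousAt.continuousWithinAt
  have hαc : Continuous α := by
    have : α = fun x => m₁ / (1 + Real.exp (-m₂ * x)) := funext hα
    rw [this]
    exact continuous_const.div (by continuity) (fun x => by positivity)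
  have hβc : Continuous β := by
    have : β = fun x => m₃ / (1 + Real.exp (-m₄ * x)) := funext hβ
    rw [this]
    exact continuous_const.div (by continuity) (fun x => by positivity)
  have contf : ContinuousOn f (Ici 0) :=
    (((hαc.comp_continuousOn contI).mul contI).mul contS).sub
      ((hβc.comp_continuousOn contI).mul contI)
  -- pointwise bounds on α, β
  have hαub : ∀ x, α x ≤ m₁ := fun x => (hα x) ▸ sig_ub m₁ m₂ x hm1.le
  have hαlb : ∀ x, 0 ≤ x → m₁ / 2 ≤ α x := fun x hx => (hα x) ▸ sig_lb m₁ m₂ x hm1.le hm2 hx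
  have hβlb : ∀ x, 0 ≤ x → m₃ / 2 ≤ β x := fun x hx => (hβ x) ▸ sig_lb m₃ m₄ x hm3.le hm4 hx
  have hαpos : ∀ x, 0 < α x := fun x => (hα x) ▸ by positivity
  have hβltm : ∀ x, β x < m₃ := fun x => (hβ x) ▸
    div_lt_self hm3 (by linarith [Real.exp_pos (-m₄ * x)])
  -- f 0 > 0
  have h0 : 0 < f 0 := by
    have h1 : m₁ / 2 ≤ α (I 0) := hαlb _ hI0.le
    have h2 : β (I 0) < m₃ := hβltm _
    have h3 : m₁ / 2 * S 0 ≤ α (I 0) * S 0 := mul_le_mul_of_nonneg_right h1 hS0.le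
    have : β (I 0) < α (I 0) * S 0 := by nlinarith
    have : 0 < α (I 0) * S 0 - β (I 0) := by linarith
    simp only [hf]
    nlinarith
  -- f > 0 on [0,∞)
  have hpos : ∀ t ≥ (0:ℝ), 0 < f t := by
    intro t ht
    rcases eq_or_lt_of_le ht with h | h
    · rwa [← h]
    by_contra hle
    push_neg at hle
    have hmem : (0:ℝ) ∈ Icc (f t) (f 0) := ⟨hle, h0.le⟩
    obtain ⟨s, hs, hfs⟩ :=
      intermediate_value_Icc' h.le (contf.mono (Icc_subset_Ici_self)) hmem
    rcases eq_or_lt_of_le hs.1 with h0s | h0s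
    · rw [← h0s] at hfs; linarith
    · exact hcon s h0s ((hderiv s h0s.le).trans hfs)
  -- I monotone
  have Imono : MonotoneOn I (Ici 0) := by
    apply monotoneOn_of_deriv_nonneg (convex_Ici 0) contI
    · intro t ht
      rw [interior_Ici] at ht
      exact (hI t (le_of_lt ht)).differentiableAt.differentiableWithinAt
    · intro t ht
      rw [interior_Ici] at ht
      rw [hderiv t ht.le]
      exact (hpos t ht.le).le
  have hIge : ∀ t ≥ (0:ℝ), I 0 ≤ I t := fun t ht => Imono self_mem_Ici ht ht
  have hIpos : ∀ t ≥ (0:ℝ), 0 < I t := fun t ht => lt_of_lt_of_le hI0 (hIge t ht)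
  -- lower bound on S
  have Slb : ∀ t ≥ (0:ℝ), m₃ / (2 * m₁) < S t := by
    intro t ht
    have hft := hpos t ht
    have hIt := hIpos t ht
    have h1 : β (I t) * I t < α (I t) * I t * S t := by
      simp only [hf] at hft; linarith
    have h2 : β (I t) < α (I t) * S t := by
      by_contra hh
      push_neg at hh
      nlinarith [mul_le_mul_of_nonneg_right hh hIt.le]
    have hβb : m₃ / 2 ≤ β (I t) := hβlb _ hIt.le
    have hSpos : 0 < S t := by
      by_contra hh
      push_neg at hh
      nlinarith [hαpos (I t), mul_nonpos_of_nonneg_of_nonpos (hαpos (I t)).le hh]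
    have h3 : α (I t) * S t ≤ m₁ * S t := mul_le_mul_of_nonneg_right (hαub _) hSpos.le
    rw [div_lt_iff₀ (by positivity : (0:ℝ) < 2 * m₁)]
    nlinarith
  -- S decays linearly
  set c : ℝ := I 0 * m₃ / 4 with hc
  have hcpos : 0 < c := by positivity
  set g : ℝ → ℝ := fun t => S t + c * t with hgdef
  have hg : ∀ t ≥ (0:ℝ), HasDerivAt g (-(α (I t)) * I t * S t + c) t := by
    intro t ht
    have h2 : HasDerivAt (fun t : ℝ => c * t) c t := by
      simpa using (hasDerivAt_id t).const_mul c
    exact (hS t ht).add h2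
  have gmono : AntitoneOn g (Ici 0) := by
    apply antitoneOn_of_deriv_nonpos (convex_Ici 0)
    · exact (contS.add (continuous_const.mul continuous_id).continuousOn)
    · intro t ht
      rw [interior_Ici] at ht
      exact (hg t ht.le).differentiableAt.differentiableWithinAt
    · intro t ht
      rw [interior_Ici] at ht
      rw [(hg t ht.le).deriv]
      have h1 : m₁ / 2 ≤ α (I t) := hαlb _ (hIpos t ht.le).le
      have h2 : I 0 ≤ I t := hIge t ht.le
      have h3 : m₃ / (2 * m₁) ≤ S t := (Slb t ht.le).le
      have hα0 : (0:ℝ) ≤ α (I t) := (hαpos _).le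
      have hkey : m₁ / 2 * (I 0) * (m₃ / (2 * m₁)) ≤ α (I t) * I t * S t :=
        mul_le_mul (mul_le_mul h1 h2 hI0.le hα0) h3 (by positivity)
          (mul_nonneg hα0 (hIpos t ht.le).le)
      have heq : m₁ / 2 * (I 0) * (m₃ / (2 * m₁)) = c := by
        rw [hc]; field_simp; ring
      linarith [heq ▸ hkey]
  -- contradiction at T = S 0 / c
  have hT : (0:ℝ) ≤ S 0 / c := by positivity
  have := gmono self_mem_Ici hT hT
  simp only [hgdef] at this
  have hcT : c * (S 0 / c) = S 0 := by field_simp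
  have hST : S (S 0 / c) ≤ 0 := by
    rw [hcT] at this; linarith
  have := Slb (S 0 / c) hT
  have : (0:ℝ) < m₃ / (2 * m₁) := by positivity
  linarith
end

section
/- Let p < 0, C* > 0, m₁, m₂ > 0, and define α(x) = m₁/(1 + exp(-m₂·x)). Let S, I : [t₀, ∞) → ℝ be differentiable functions with 0 < S(t) and 0 < I(t) ≤ 1 for all t ≥ t₀, satisfying S' = -α(I)·I·S and I' = α(I)·I·S - C*·I^(p+1) on [t₀, ∞). Then for every ε with 0 < ε < I(t₀) there exists t > t₀ such that I(t) < ε. -/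
/-!
The total population `S + I` has derivative `-C* I^(p+1)`, the adoption terms cancelling.
If `I` stayed at least `ε`, then, since `I^(p+1) ≥ I` for `p < 0` and `0 < I ≤ 1`, the total
population would decrease at rate at least `C* ε` and so become nonpositive in finite time,
contradicting `S, I > 0`.
-/

open Set

lemma sub_le_mul_sub_of_hasDerivAt_le {f f' : ℝ → ℝ} {t₀ C : ℝ}
    (hf : ∀ t ≥ t₀, HasDerivAt f (f' t) t) (hf' : ∀ t ≥ t₀, f' t ≤ C) {t : ℝ} (ht : t₀ ≤ t) :
    f t - f t₀ ≤ C * (t - t₀) := by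
  refine (convex_Ici t₀).image_sub_le_mul_sub_of_deriv_le
    (fun s hs ↦ (hf s hs).continuousAt.continuousWithinAt)
    (fun s hs ↦ (hf s (interior_subset hs)).differentiableAt.differentiableWithinAt)
    (fun s hs ↦ ?_) t₀ self_mem_Ici t ht ht
  rw [(hf s (interior_subset hs)).deriv]
  exact hf' s (interior_subset hs)

lemma exists_nonpos_of_hasDerivAt_le_neg {f f' : ℝ → ℝ} {t₀ c : ℝ} (hc : 0 < c)
    (hf : ∀ t ≥ t₀, HasDerivAt f (f' t) t) (hf' : ∀ t ≥ t₀, f' t ≤ -c) :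
    ∃ t ≥ t₀, f t ≤ 0 := by
  set t := t₀ + |f t₀| / c
  have ht : t₀ ≤ t := le_add_of_nonneg_right (by positivity)
  refine ⟨t, ht, ?_⟩
  have hdecay := sub_le_mul_sub_of_hasDerivAt_le hf hf' ht
  have hct : -c * (t - t₀) = -|f t₀| := by simp only [t]; field_simp; ring
  linarith [le_abs_self (f t₀)]

lemma hasDerivAt_add_of_trendCycle {α S I : ℝ → ℝ} {t r : ℝ}
    (hS : HasDerivAt S (-(α (I t)) * I t * S t) t)
    (hI : HasDerivAt I (α (I t) * I t * S t - r) t) :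
    HasDerivAt (S + I) (-r) t :=
  (hS.add hI).congr_deriv (by ring)

theorem I_falls_below_any_threshold_general (p Cstar t₀ : ℝ)
    (hp : p < 0) (hC : 0 < Cstar)
    (α : ℝ → ℝ)
    (S I : ℝ → ℝ)
    (hSpos : ∀ t ≥ t₀, 0 < S t)
    (hIpos : ∀ t ≥ t₀, 0 < I t ∧ I t ≤ 1)
    (hS : ∀ t ≥ t₀, HasDerivAt S (-(α (I t)) * I t * S t) t)
    (hI : ∀ t ≥ t₀, HasDerivAt I (α (I t) * I t * S t - Cstar * I t ^ (p + 1)) t) :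
    ∀ ε : ℝ, 0 < ε → ε < I t₀ → ∃ t > t₀, I t < ε := by
  intro ε hε hεI
  by_contra! hstay
  have hεle : ∀ t ≥ t₀, ε ≤ I t := fun t ht ↦
    ht.eq_or_lt.elim (fun h ↦ h ▸ hεI.le) (hstay t)
  have hrate : ∀ t ≥ t₀, -(Cstar * I t ^ (p + 1)) ≤ -(Cstar * ε) := fun t ht ↦ by
    have hI_le_rpow : I t ≤ I t ^ (p + 1) :=
      Real.self_le_rpow_of_le_one (hIpos t ht).1.le (hIpos t ht).2 (by linarith)
    have := mul_le_mul_of_nonneg_left ((hεle t ht).trans hI_le_rpow) hC.le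
    linarith
  obtain ⟨t, ht, hN⟩ := exists_nonpos_of_hasDerivAt_le_neg (mul_pos hC hε)
    (fun t ht ↦ hasDerivAt_add_of_trendCycle (hS t ht) (hI t ht)) hrate
  have := hSpos t ht
  have := (hIpos t ht).1
  simp only [Pi.add_apply] at hN
  linarith

/-- Key claim in the proof of Lemma 3.4: after the transition time, with p < 0,
the adopter population I eventually falls below any positive threshold ε < I(t₀). -/
theorem I_falls_below_any_threshold (p Cstar m₁ m₂ t₀ : ℝ)
    (hp : p < 0) (hC : 0 < Cstar) (hm1 : 0 < m₁) (hm2 : 0 < m₂)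
    (α : ℝ → ℝ) (hα : ∀ x, α x = m₁ / (1 + Real.exp (-m₂ * x)))
    (S I : ℝ → ℝ)
    (hSpos : ∀ t ≥ t₀, 0 < S t)
    (hIpos : ∀ t ≥ t₀, 0 < I t ∧ I t ≤ 1)
    (hS : ∀ t ≥ t₀, HasDerivAt S (-(α (I t)) * I t * S t) t)
    (hI : ∀ t ≥ t₀, HasDerivAt I (α (I t) * I t * S t - Cstar * I t ^ (p + 1)) t) :
    ∀ ε : ℝ, 0 < ε → ε < I t₀ → ∃ t > t₀, I t < ε :=
  I_falls_below_any_threshold_general p Cstar t₀ hp hC α S I hSpos hIpos hS hI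
end

section
/- Let p < 0, m₁, m₂ > 0, and define α(x) = m₁/(1 + exp(-m₂·x)). Let 0 < β* ≤ m₃ with m₃/m₁ < 1/2, set C* = β*·I(t₀)^(-p), and let S, I : [t₀, ∞) → ℝ be differentiable functions with 0 < S(t) and 0 < I(t) ≤ 1 for all t ≥ t₀, satisfying S' = -α(I)·I·S and I' = α(I)·I·S - C*·I^(p+1) on [t₀, ∞). Then there exists τ ≥ t₀ such that I(t) ≤ (C*/(2·m₁))·I(t)^(p+1) for all t > τ (equivalently, I(t)^(-p) ≤ C*/(2·m₁) for all t > τ). -/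
/-!
Since `S` is decreasing and `α ≤ m₁`, the infection term `α(I)·I·S` is at most `m₁·S(t₀)·I`,
while for `p < 0` the rejection term `C*·I^p·I` dominates it as soon as `I` is small. So `I`
strictly decreases whenever it sits at the level `ℓ` with `C*·ℓ^p = 2·m₁·max(S(t₀), 1)`, and a
solution that reaches `[0, ℓ]` stays there. It does reach it: as long as `I > ℓ`, the total
`S + I` decreases at rate `C*·I^(p+1) ≥ C*·I > C*·ℓ` (using `I ≤ 1`), which would make it
negative in finite time. Below `ℓ` we have `C*·I^p ≥ C*·ℓ^p ≥ 2·m₁`, which is the claim.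
-/

open Set

theorem exists_pos_mul_rpow_eq {p c k : ℝ} (hp : p ≠ 0) (hc : 0 < c) (hk : 0 < k) :
    ∃ x > 0, c * x ^ p = k :=
  ⟨(k / c) ^ p⁻¹, by positivity, by rw [Real.rpow_inv_rpow (by positivity) hp]; field_simp⟩

theorem le_mul_rpow_add_one {x c p : ℝ} (hx : 0 < x) (h : 1 ≤ c * x ^ p) :
    x ≤ c * x ^ (p + 1) := by
  rw [Real.rpow_add_one hx.ne', ← mul_assoc]
  exact le_mul_of_one_le_left hx.le h

section HalfLine

variable {f f' : ℝ → ℝ} {a : ℝ}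

theorem antitoneOn_Ici_of_hasDerivAt_nonpos (hf : ∀ t ≥ a, HasDerivAt f (f' t) t)
    (hf' : ∀ t ≥ a, f' t ≤ 0) : AntitoneOn f (Ici a) :=
  antitoneOn_of_hasDerivWithinAt_nonpos (convex_Ici a)
    (fun t ht => (hf t ht).continuousAt.continuousWithinAt)
    (fun t ht => (hf t (interior_subset ht)).hasDerivWithinAt)
    (fun t ht => hf' t (interior_subset ht))

theorem exists_neg_of_hasDerivAt_le_neg {c : ℝ} (hc : 0 < c)
    (hf : ∀ t ≥ a, HasDerivAt f (f' t) t) (hf' : ∀ t ≥ a, f' t ≤ -c) : ∃ t ≥ a, f t < 0 := by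
  have hanti : AntitoneOn (fun t => f t + c * t) (Ici a) :=
    antitoneOn_Ici_of_hasDerivAt_nonpos
      (fun t ht => (hf t ht).add ((hasDerivAt_id t).const_mul c))
      (fun t ht => by linarith [hf' t ht])
  set T := a + (|f a| + 1) / c
  have hdrop : c * (T - a) = |f a| + 1 := by simp only [T, add_sub_cancel_left]; field_simp
  have haT : a ≤ T := by simp only [T, le_add_iff_nonneg_right]; positivity
  refine ⟨T, haT, ?_⟩
  have := hanti self_mem_Ici haT haT
  linarith [le_abs_self (f a)]

theorem le_of_hasDerivAt_neg_of_eq {ℓ : ℝ} (hf : ∀ t ≥ a, HasDerivAt f (f' t) t)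
    (hℓ : ∀ t ≥ a, f t = ℓ → f' t < 0) (ha : f a ≤ ℓ) : ∀ t ≥ a, f t ≤ ℓ := fun t ht =>
  image_le_of_deriv_right_lt_deriv_boundary (b := t) (B := fun _ => ℓ) (B' := fun _ => 0)
    (fun x hx => (hf x hx.1).continuousAt.continuousWithinAt)
    (fun x hx => (hf x hx.1).hasDerivWithinAt) ha (fun _ => hasDerivAt_const _ _)
    (fun x hx hx' => hℓ x hx.1 hx') ⟨ht, le_rfl⟩

end HalfLine

section Model

variable {α S I : ℝ → ℝ} {p C t₀ : ℝ}

theorem antitoneOn_susceptible (hα : ∀ x, 0 ≤ α x) (hSpos : ∀ t ≥ t₀, 0 < S t)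
    (hIpos : ∀ t ≥ t₀, 0 < I t) (hS : ∀ t ≥ t₀, HasDerivAt S (-(α (I t)) * I t * S t) t) :
    AntitoneOn S (Ici t₀) :=
  antitoneOn_Ici_of_hasDerivAt_nonpos hS fun t ht => by
    have := mul_nonneg (mul_nonneg (hα (I t)) (hIpos t ht).le) (hSpos t ht).le
    linarith

theorem exists_infected_le (hp : p ≤ 0) (hC : 0 < C) {ℓ : ℝ} (hℓ : 0 < ℓ)
    (hSpos : ∀ t ≥ t₀, 0 < S t) (hIpos : ∀ t ≥ t₀, 0 < I t ∧ I t ≤ 1)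
    (hS : ∀ t ≥ t₀, HasDerivAt S (-(α (I t)) * I t * S t) t)
    (hI : ∀ t ≥ t₀, HasDerivAt I (α (I t) * I t * S t - C * I t ^ (p + 1)) t) :
    ∃ τ ≥ t₀, I τ ≤ ℓ := by
  by_contra! hI_gt
  obtain ⟨t, ht, hSI⟩ := exists_neg_of_hasDerivAt_le_neg (mul_pos hC hℓ)
    (fun t ht => (hS t ht).add (hI t ht)) fun t ht => by
      have hI_le : I t ≤ I t ^ (p + 1) := by
        simpa using Real.rpow_le_rpow_of_exponent_ge (hIpos t ht).1 (hIpos t ht).2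
          (show p + 1 ≤ 1 by linarith)
      nlinarith [mul_le_mul_of_nonneg_left ((hI_gt t ht).le.trans hI_le) hC.le]
  linarith [hSpos t ht, (hIpos t ht).1, show (S + I) t = S t + I t from rfl]

theorem infected_le_of_le {B ℓ τ : ℝ} (hℓ : 0 < ℓ) (hB : B < C * ℓ ^ p)
    (hαS : ∀ t ≥ t₀, α (I t) * S t ≤ B)
    (hI : ∀ t ≥ t₀, HasDerivAt I (α (I t) * I t * S t - C * I t ^ (p + 1)) t)
    (hτ : t₀ ≤ τ) (hIτ : I τ ≤ ℓ) : ∀ t ≥ τ, I t ≤ ℓ := by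
  refine le_of_hasDerivAt_neg_of_eq (fun t ht => hI t (hτ.trans ht)) (fun t ht hIt => ?_) hIτ
  have hαS_lt := mul_lt_mul_of_pos_right ((hαS t (hτ.trans ht)).trans_lt hB) hℓ
  rw [hIt] at hαS_lt ⊢
  rw [Real.rpow_add_one hℓ.ne']
  linarith

end Model

theorem boundedness_after_transition_general (p m₁ m₂ βstar t₀ : ℝ)
    (hp : p < 0) (hm1 : 0 < m₁)
    (hβpos : 0 < βstar)
    (α : ℝ → ℝ) (hα : ∀ x, α x = m₁ / (1 + Real.exp (-m₂ * x)))
    (S I : ℝ → ℝ) (Cstar : ℝ) (hCstar : Cstar = βstar * I t₀ ^ (-p))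
    (hSpos : ∀ t ≥ t₀, 0 < S t)
    (hIpos : ∀ t ≥ t₀, 0 < I t ∧ I t ≤ 1)
    (hS : ∀ t ≥ t₀, HasDerivAt S (-(α (I t)) * I t * S t) t)
    (hI : ∀ t ≥ t₀, HasDerivAt I (α (I t) * I t * S t - Cstar * I t ^ (p + 1)) t) :
    ∃ τ ≥ t₀, ∀ t > τ, I t ≤ Cstar / (2 * m₁) * I t ^ (p + 1) := by
  have hC : 0 < Cstar := hCstar ▸ mul_pos hβpos (Real.rpow_pos_of_pos (hIpos t₀ le_rfl).1 _)
  have hαS : ∀ t ≥ t₀, α (I t) * S t ≤ m₁ * S t₀ := by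
    have hS_anti := antitoneOn_susceptible (fun x => by rw [hα]; positivity) hSpos
      (fun t ht => (hIpos t ht).1) hS
    intro t ht
    refine mul_le_mul ?_ (hS_anti self_mem_Ici ht ht) (hSpos t ht).le hm1.le
    rw [hα]
    exact div_le_self hm1.le (by linarith [Real.exp_pos (-m₂ * I t)])
  obtain ⟨ℓ, hℓ, hℓp⟩ := exists_pos_mul_rpow_eq hp.ne hC
    (show 0 < 2 * m₁ * max (S t₀) 1 by positivity)
  have hℓ_trap : m₁ * S t₀ < Cstar * ℓ ^ p := by
    rw [hℓp]
    nlinarith [le_max_left (S t₀) 1, le_max_right (S t₀) 1]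
  obtain ⟨τ, hτ, hIτ⟩ := exists_infected_le hp.le hC hℓ hSpos hIpos hS hI
  refine ⟨τ, hτ, fun t ht => le_mul_rpow_add_one (hIpos t (hτ.trans ht.le)).1 ?_⟩
  calc 1 ≤ Cstar / (2 * m₁) * ℓ ^ p := by
        rw [div_mul_eq_mul_div, hℓp, one_le_div₀ (by positivity)]
        nlinarith [le_max_right (S t₀) 1]
    _ ≤ Cstar / (2 * m₁) * I t ^ p := by
        refine mul_le_mul_of_nonneg_left ?_ (by positivity)
        exact Real.rpow_le_rpow_of_nonpos (hIpos t (hτ.trans ht.le)).1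
          (infected_le_of_le hℓ hℓ_trap hαS hI hτ hIτ t ht.le) hp.le

/-- Lemma 3.4 (boundedness of I after the transition time, case p < 0):
with C* = β*·I(t₀)^(-p), 0 < β* ≤ m₃ and m₃/m₁ < 1/2, there exists τ ≥ t₀ such that
I(t) ≤ (C*/(2·m₁))·I(t)^(p+1) for all t > τ. -/
theorem boundedness_after_transition (p m₁ m₂ m₃ βstar t₀ : ℝ)
    (hp : p < 0) (hm1 : 0 < m₁) (hm2 : 0 < m₂)
    (hβpos : 0 < βstar) (hβle : βstar ≤ m₃) (hratio : m₃ / m₁ < 1 / 2)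
    (α : ℝ → ℝ) (hα : ∀ x, α x = m₁ / (1 + Real.exp (-m₂ * x)))
    (S I : ℝ → ℝ) (Cstar : ℝ) (hCstar : Cstar = βstar * I t₀ ^ (-p))
    (hSpos : ∀ t ≥ t₀, 0 < S t)
    (hIpos : ∀ t ≥ t₀, 0 < I t ∧ I t ≤ 1)
    (hS : ∀ t ≥ t₀, HasDerivAt S (-(α (I t)) * I t * S t) t)
    (hI : ∀ t ≥ t₀, HasDerivAt I (α (I t) * I t * S t - Cstar * I t ^ (p + 1)) t) :
    ∃ τ ≥ t₀, ∀ t > τ, I t ≤ Cstar / (2 * m₁) * I t ^ (p + 1) :=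
  boundedness_after_transition_general p m₁ m₂ βstar t₀ hp hm1 hβpos α hα S I Cstar hCstar hSpos
    hIpos hS hI
end

section
/- Let p > 0, m₁ > 0, 0 < β* < m₁, a* > 0, and set C* = β*·a*^(-p). Let I : [t*, ∞) → ℝ be a differentiable function with I(t) > 0 for all t ≥ t*, I(t*) = a*, and -C*·I(t)^(p+1) ≤ I'(t) ≤ m₁·I(t) - C*·I(t)^(p+1) for all t ≥ t*. Then for all t > t*: (a*^(-p) + p·C*·(t - t*))^(-1/p) ≤ I(t) ≤ (a*^(-p) - (a*^(-p) - C*/m₁)·(1 - exp(-p·m₁·(t - t*))))^(-1/p). In particular, I(t) decays at most at a polynomial rate of order t^(-1/p). -/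
/-!
The Bernoulli substitution `y = I ^ (-p)` turns the differential inequality into the linear one
`p C* - p m₁ y ≤ y' ≤ p C*`. Integrating the right half gives `y(t) ≤ a*^(-p) + p C* (t - t*)`,
and Grönwall's inequality applied to `-y` gives that `y` stays above the solution
`C*/m₁ + (a*^(-p) - C*/m₁) e^(-p m₁ (t - t*))` of the linear equation. Both bounds transfer back
to `I = y ^ (-1/p)` with their directions reversed, since `x ↦ x ^ (-1/p)` is decreasing.
-/

open Real

theorem le_gronwallBound_of_hasDerivAt_of_le {f f' : ℝ → ℝ} {a δ K ε : ℝ}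
    (hf : ∀ t ≥ a, HasDerivAt f (f' t) t) (ha : f a ≤ δ)
    (bound : ∀ t ≥ a, f' t ≤ K * f t + ε) :
    ∀ t ≥ a, f t ≤ gronwallBound δ K ε (t - a) := fun t ht =>
  le_gronwallBound_of_liminf_deriv_right_le (b := t)
    (fun s hs => (hf s hs.1).continuousAt.continuousWithinAt)
    (fun s hs _ hr => (hf s hs.1).hasDerivWithinAt.liminf_right_slope_le hr) ha
    (fun s hs => bound s hs.1) t ⟨ht, le_rfl⟩

theorem le_add_mul_of_deriv_le {f f' : ℝ → ℝ} {a c : ℝ}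
    (hf : ∀ t ≥ a, HasDerivAt f (f' t) t) (bound : ∀ t ≥ a, f' t ≤ c) :
    ∀ t ≥ a, f t ≤ f a + c * (t - a) := by
  simpa [gronwallBound_K0] using
    le_gronwallBound_of_hasDerivAt_of_le (K := 0) hf le_rfl fun t ht => by simpa using bound t ht

theorem add_mul_exp_le_of_mul_sub_le_deriv {f f' : ℝ → ℝ} {a k c : ℝ} (hk : k ≠ 0)
    (hf : ∀ t ≥ a, HasDerivAt f (f' t) t) (bound : ∀ t ≥ a, k * (c - f t) ≤ f' t) :
    ∀ t ≥ a, c + (f a - c) * exp (-k * (t - a)) ≤ f t := by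
  intro t ht
  have := le_gronwallBound_of_hasDerivAt_of_le (K := -k) (ε := -(k * c))
    (fun s hs => (hf s hs).neg) le_rfl
    (fun s hs => by simp only [Pi.neg_apply]; linarith [bound s hs]) t ht
  rw [gronwallBound_of_K_ne_0 (neg_ne_zero.mpr hk), neg_div_neg_eq, mul_div_cancel_left₀ c hk,
    Pi.neg_apply, Pi.neg_apply] at this
  linarith

theorem neg_mul_rpow_neg_sub_one_mul_le {x d C p : ℝ} (hx : 0 < x) (hp : 0 ≤ p)
    (h : -C * x ^ (p + 1) ≤ d) : -p * x ^ (-p - 1) * d ≤ p * C := by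
  have hcancel : x ^ (-p - 1) * x ^ (p + 1) = 1 := by
    rw [← rpow_add hx]; norm_num
  have hscaled : -C ≤ x ^ (-p - 1) * d := by
    have := mul_le_mul_of_nonneg_left h (rpow_pos_of_pos hx (-p - 1)).le
    linear_combination this + C * hcancel
  nlinarith

theorem le_neg_mul_rpow_neg_sub_one_mul {x d m C p : ℝ} (hx : 0 < x) (hp : 0 ≤ p)
    (h : d ≤ m * x - C * x ^ (p + 1)) : p * (C - m * x ^ (-p)) ≤ -p * x ^ (-p - 1) * d := by
  have hcancel : x ^ (-p - 1) * x ^ (p + 1) = 1 := by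
    rw [← rpow_add hx]; norm_num
  have hshift : x ^ (-p - 1) * x = x ^ (-p) := by
    rw [← rpow_add_one hx.ne']; norm_num
  have hscaled : x ^ (-p - 1) * d ≤ m * x ^ (-p) - C := by
    have := mul_le_mul_of_nonneg_left h (rpow_pos_of_pos hx (-p - 1)).le
    linear_combination this + m * hshift - C * hcancel
  nlinarith

theorem rpow_neg_rpow_neg_one_div {x p : ℝ} (hx : 0 ≤ x) (hp : p ≠ 0) :
    (x ^ (-p)) ^ (-1 / p) = x := by
  rw [← rpow_mul hx, show -p * (-1 / p) = 1 by field_simp, rpow_one]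

theorem rpow_neg_one_div_le_of_rpow_neg_le {x b p : ℝ} (hx : 0 < x) (hp : 0 < p)
    (h : x ^ (-p) ≤ b) : b ^ (-1 / p) ≤ x := by
  calc b ^ (-1 / p) ≤ (x ^ (-p)) ^ (-1 / p) :=
        rpow_le_rpow_of_nonpos (rpow_pos_of_pos hx _) h (by rw [neg_div]; simp [hp.le])
    _ = x := rpow_neg_rpow_neg_one_div hx.le hp.ne'

theorem le_rpow_neg_one_div_of_le_rpow_neg {x b p : ℝ} (hx : 0 < x) (hp : 0 < p) (hb : 0 < b)
    (h : b ≤ x ^ (-p)) : x ≤ b ^ (-1 / p) := by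
  calc x = (x ^ (-p)) ^ (-1 / p) := (rpow_neg_rpow_neg_one_div hx.le hp.ne').symm
    _ ≤ b ^ (-1 / p) := rpow_le_rpow_of_nonpos hb h (by rw [neg_div]; simp [hp.le])

theorem classic_two_sided_bound_general (p m₁ βstar astar tstar : ℝ)
    (hp : 0 < p) (hm1 : 0 < m₁) (hβpos : 0 < βstar)
    (hastar : 0 < astar)
    (Cstar : ℝ) (hCstar : Cstar = βstar * astar ^ (-p))
    (I I' : ℝ → ℝ)
    (hderiv : ∀ t ≥ tstar, HasDerivAt I (I' t) t)
    (hpos : ∀ t ≥ tstar, 0 < I t)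
    (hinit : I tstar = astar)
    (hineq : ∀ t ≥ tstar,
      -Cstar * I t ^ (p + 1) ≤ I' t ∧ I' t ≤ m₁ * I t - Cstar * I t ^ (p + 1)) :
    ∀ t > tstar,
      (astar ^ (-p) + p * Cstar * (t - tstar)) ^ (-1 / p) ≤ I t ∧
      I t ≤ (astar ^ (-p) -
        (astar ^ (-p) - Cstar / m₁) * (1 - Real.exp (-p * m₁ * (t - tstar)))) ^ (-1 / p) := by
  have hy : ∀ t ≥ tstar, HasDerivAt (fun s => I s ^ (-p)) (-p * I t ^ (-p - 1) * I' t) t :=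
    fun t ht => ((hderiv t ht).rpow_const (Or.inl (hpos t ht).ne')).congr_deriv (by ring)
  have hy_upper := le_add_mul_of_deriv_le hy fun t ht =>
    neg_mul_rpow_neg_sub_one_mul_le (hpos t ht) hp.le (hineq t ht).1
  have hy_lower := add_mul_exp_le_of_mul_sub_le_deriv (c := Cstar / m₁)
    (mul_pos hp hm1).ne' hy fun t ht => by
      have := le_neg_mul_rpow_neg_sub_one_mul (hpos t ht) hp.le (hineq t ht).2
      have hcancel : p * m₁ * (Cstar / m₁) = p * Cstar := by field_simp
      linarith
  simp only [hinit, ← neg_mul p m₁] at hy_upper hy_lower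
  intro t ht
  set e := exp (-p * m₁ * (t - tstar))
  have he_pos : 0 < e := exp_pos _
  have he_le : e ≤ 1 := exp_le_one_iff.mpr (by nlinarith [mul_pos hp hm1, sub_pos.mpr ht])
  have hC_div : 0 ≤ Cstar / m₁ := div_nonneg (by rw [hCstar]; positivity) hm1.le
  refine ⟨rpow_neg_one_div_le_of_rpow_neg_le (hpos t ht.le) hp ?_,
    le_rpow_neg_one_div_of_le_rpow_neg (hpos t ht.le) hp ?_ ?_⟩
  · linarith [hy_upper t ht.le]
  · nlinarith [mul_pos (rpow_pos_of_pos hastar (-p)) he_pos]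
  · linarith [hy_lower t ht.le]

/-- Theorem 3.6, part (1) (the Classic case p > 0): with C* = β*·a*^(-p), β* < m₁,
a* = I(t*) and -C*·I^(p+1) ≤ I' ≤ m₁·I - C*·I^(p+1) for t ≥ t*, the adopter fraction
satisfies the stated two-sided polynomial bound for t > t*. -/
theorem classic_two_sided_bound (p m₁ βstar astar tstar : ℝ)
    (hp : 0 < p) (hm1 : 0 < m₁) (hβpos : 0 < βstar) (hβlt : βstar < m₁)
    (hastar : 0 < astar)
    (Cstar : ℝ) (hCstar : Cstar = βstar * astar ^ (-p))
    (I I' : ℝ → ℝ)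
    (hderiv : ∀ t ≥ tstar, HasDerivAt I (I' t) t)
    (hpos : ∀ t ≥ tstar, 0 < I t)
    (hinit : I tstar = astar)
    (hineq : ∀ t ≥ tstar,
      -Cstar * I t ^ (p + 1) ≤ I' t ∧ I' t ≤ m₁ * I t - Cstar * I t ^ (p + 1)) :
    ∀ t > tstar,
      (astar ^ (-p) + p * Cstar * (t - tstar)) ^ (-1 / p) ≤ I t ∧
      I t ≤ (astar ^ (-p) -
        (astar ^ (-p) - Cstar / m₁) * (1 - Real.exp (-p * m₁ * (t - tstar)))) ^ (-1 / p) :=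
  classic_two_sided_bound_general p m₁ βstar astar tstar hp hm1 hβpos hastar Cstar hCstar I I'
    hderiv hpos hinit hineq
end

section
/- Let C* > 0, let α : ℝ → ℝ be a differentiable, strictly increasing, positive function, and let S, I : [t*, ∞) → ℝ be twice differentiable functions with S(t) > 0 and I(t) > 0 for all t ≥ t*, satisfying S' = -α(I)·I·S and I' = (α(I)·S - C*)·I on [t*, ∞), and I'(t*) = 0. Then I'(t) < 0 for all t > t*; that is, I is strictly decreasing on (t*, ∞). -/
/-- Strict decrease of I after the transition time (proof of Theorem 3.6, part (2),
the Fashion case p = 0): if S' = -α(I)·I·S, I' = (α(I)·S - C*)·I with S, I > 0,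
α strictly increasing and positive, and I'(t*) = 0, then I'(t) < 0 for all t > t*. -/
theorem I_strictly_decreasing_after_transition (Cstar tstar : ℝ) (hC : 0 < Cstar)
    (α : ℝ → ℝ) (hαdiff : Differentiable ℝ α) (hαmono : StrictMono α)
    (hαpos : ∀ x, 0 < α x)
    (S I : ℝ → ℝ)
    (hSpos : ∀ t ≥ tstar, 0 < S t) (hIpos : ∀ t ≥ tstar, 0 < I t)
    (hS : ∀ t ≥ tstar, HasDerivAt S (-(α (I t)) * I t * S t) t)
    (hI : ∀ t ≥ tstar, HasDerivAt I ((α (I t) * S t - Cstar) * I t) t)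
    (hIc : deriv I tstar = 0) :
    ∀ t > tstar, deriv I t < 0 := by
  set φ : ℝ → ℝ := fun u => α (I u) * S u - Cstar with hφdef
  have hφd : ∀ u ≥ tstar, HasDerivAt φ
      (deriv α (I u) * ((α (I u) * S u - Cstar) * I u) * S u
        + α (I u) * (-(α (I u)) * I u * S u)) u := by
    intro u hu
    have h1 : HasDerivAt (fun v => α (I v))
        (deriv α (I u) * ((α (I u) * S u - Cstar) * I u)) u :=
      ((hαdiff (I u)).hasDerivAt).comp u (hI u hu)
    exact (h1.mul (hS u hu)).sub_const Cstar
  -- at a zero of φ the derivative of φ is negative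
  have hneg : ∀ c ≥ tstar, φ c = 0 → ∃ d < 0, HasDerivAt φ d c := by
    intro c hc hc0
    refine ⟨_, ?_, hφd c hc⟩
    have h0 : α (I c) * S c - Cstar = 0 := hc0
    rw [h0]
    have h1 := hαpos (I c)
    have h2 := hIpos c hc
    have h3 := hSpos c hc
    have h4 : 0 < α (I c) * (α (I c) * I c * S c) := by positivity
    nlinarith
  have hφ0 : φ tstar = 0 := by
    have h := (hI tstar le_rfl).deriv
    rw [hIc] at h
    rcases mul_eq_zero.mp h.symm with h' | h'
    · exact h'
    · exact absurd h' (ne_of_gt (hIpos tstar le_rfl))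
  -- after any zero, φ is eventually negative on the right
  have hA : ∀ c ≥ tstar, φ c = 0 → ∀ᶠ s in nhdsWithin c (Set.Ioi c), φ s < 0 := by
    intro c hc hc0
    obtain ⟨d, hdneg, hd⟩ := hneg c hc hc0
    have hslope : Filter.Tendsto (slope φ c) (nhdsWithin c (Set.Ioi c)) (nhds d) :=
      (hasDerivAt_iff_tendsto_slope.mp hd).mono_left
        (nhdsWithin_mono _ (fun s hs => ne_of_gt hs))
    filter_upwards [hslope.eventually_lt_const hdneg, self_mem_nhdsWithin] with s hs hs'
    have h1 : (0:ℝ) < s - c := sub_pos.mpr hs'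
    have h2 : slope φ c s = (φ s - φ c) / (s - c) := slope_def_field φ c s
    rw [h2, hc0, sub_zero] at hs
    rcases div_neg_iff.mp hs with ⟨_, h'⟩ | ⟨h', _⟩
    · linarith
    · exact h'
  -- main claim: φ < 0 strictly after tstar
  have key : ∀ t > tstar, φ t < 0 := by
    intro t ht
    by_contra hcon
    push_neg at hcon
    -- pick s0 ∈ (tstar, t) with φ s0 < 0
    obtain ⟨s0, hs0neg, hs0mem⟩ :=
      ((hA tstar le_rfl hφ0).and (Ioo_mem_nhdsGT_of_mem ⟨le_rfl, ht⟩)).exists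
    set A : Set ℝ := Set.Icc s0 t ∩ φ ⁻¹' Set.Ici 0 with hAdef
    have hφcont : ContinuousOn φ (Set.Icc s0 t) := fun s hs =>
      ((hφd s (le_trans hs0mem.1.le hs.1)).continuousAt).continuousWithinAt
    have hAclosed : IsClosed A :=
      hφcont.preimage_isClosed_of_isClosed isClosed_Icc isClosed_Ici
    have hAne : A.Nonempty := ⟨t, ⟨hs0mem.2.le, le_rfl⟩, hcon⟩
    have hAbdd : BddBelow A := ⟨s0, fun x hx => hx.1.1⟩
    obtain ⟨c, hcA, hcinf⟩ : ∃ c, c ∈ A ∧ c = sInf A :=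
      ⟨sInf A, hAclosed.csInf_mem hAne hAbdd, rfl⟩
    have hs0c : s0 < c := lt_of_le_of_ne hcA.1.1 (by
      rintro rfl
      exact absurd hcA.2 (not_le.mpr hs0neg))
    have hcts : tstar < c := lt_trans hs0mem.1 hs0c
    have hbefore : ∀ s, s0 ≤ s → s < c → φ s < 0 := by
      intro s hs1 hs2
      by_contra hs3
      push_neg at hs3
      have : s ∈ A := ⟨⟨hs1, hs2.le.trans hcA.1.2⟩, hs3⟩
      exact absurd (hcinf ▸ csInf_le hAbdd this) (not_le.mpr hs2)
    -- φ c = 0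
    have hφc0 : φ c = 0 := by
      refine le_antisymm ?_ hcA.2
      have hct : Filter.Tendsto φ (nhdsWithin c (Set.Iio c)) (nhds (φ c)) :=
        ((hφd c hcts.le).continuousAt).mono_left nhdsWithin_le_nhds
      refine le_of_tendsto hct ?_
      filter_upwards [Ioo_mem_nhdsLT_of_mem ⟨hs0c, le_rfl⟩] with s hs
      exact (hbefore s hs.1.le hs.2).le
    -- derivative of φ at c is negative, but left slopes are positive: contradiction
    obtain ⟨d, hdneg, hd⟩ := hneg c hcts.le hφc0
    have hslope : Filter.Tendsto (slope φ c) (nhdsWithin c (Set.Iio c)) (nhds d) :=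
      (hasDerivAt_iff_tendsto_slope.mp hd).mono_left
        (nhdsWithin_mono _ (fun s hs => ne_of_lt hs))
    obtain ⟨s, hs1, hs2⟩ :=
      ((hslope.eventually_lt_const hdneg).and (Ioo_mem_nhdsLT_of_mem ⟨hs0c, le_rfl⟩)).exists
    have h1 : s - c < 0 := sub_neg.mpr hs2.2
    have h2 : slope φ c s = (φ s - φ c) / (s - c) := slope_def_field φ c s
    rw [h2, hφc0, sub_zero] at hs1
    have h3 : φ s < 0 := hbefore s hs2.1.le hs2.2
    have h4 : 0 < φ s / (s - c) := div_pos_of_neg_of_neg h3 h1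
    linarith
  intro t ht
  rw [(hI t ht.le).deriv]
  exact mul_neg_of_neg_of_pos (key t ht) (hIpos t ht.le)
end

section
/- Let C* > 0, let α : ℝ → ℝ be a differentiable positive function, and let S, I : [t*, ∞) → ℝ be twice differentiable functions with S(t*) > 0 and I(t*) > 0, satisfying S' = -α(I)·I·S and I' = (α(I)·S - C*)·I near t*, with I'(t*) = 0. Then I''(t*) = α(I(t*))·I(t*)·S'(t*), and in particular I''(t*) < 0. -/
/-- Second derivative computation at the transition time (proof of Theorem 3.6, part (2)):
if near t* the model S' = -α(I)·I·S, I' = (α(I)·S - C*)·I holds, with S(t*) > 0,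
I(t*) > 0 and I'(t*) = 0, then I''(t*) = α(I(t*))·I(t*)·S'(t*) < 0. -/
theorem second_derivative_at_transition (Cstar tstar : ℝ) (hC : 0 < Cstar)
    (α : ℝ → ℝ) (hαdiff : Differentiable ℝ α) (hαpos : ∀ x, 0 < α x)
    (S I : ℝ → ℝ)
    (hSstar : 0 < S tstar) (hIstar : 0 < I tstar)
    (hS : ∀ᶠ t in nhds tstar, HasDerivAt S (-(α (I t)) * I t * S t) t)
    (hI : ∀ᶠ t in nhds tstar, HasDerivAt I ((α (I t) * S t - Cstar) * I t) t)
    (hIc : deriv I tstar = 0) :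
    deriv (deriv I) tstar = α (I tstar) * I tstar * deriv S tstar ∧
    deriv (deriv I) tstar < 0 := by
  have hIt : HasDerivAt I ((α (I tstar) * S tstar - Cstar) * I tstar) tstar := hI.self_of_nhds
  have hSt : HasDerivAt S (-(α (I tstar)) * I tstar * S tstar) tstar := hS.self_of_nhds
  have hId0 : (α (I tstar) * S tstar - Cstar) * I tstar = 0 := by
    rw [← hIt.deriv, hIc]
  have hfac : α (I tstar) * S tstar - Cstar = 0 := by
    rcases mul_eq_zero.mp hId0 with h | h
    · exact h
    · exact absurd h hIstar.ne'
  have hI0 : HasDerivAt I 0 tstar := by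
    have := hIt
    rw [hfac, zero_mul] at this
    exact this
  -- derivative of g at tstar
  have hαI : HasDerivAt (fun t => α (I t)) (deriv α (I tstar) * 0) tstar :=
    (hαdiff (I tstar)).hasDerivAt.comp tstar hI0
  have hg : HasDerivAt (fun t => (α (I t) * S t - Cstar) * I t)
      (((deriv α (I tstar) * 0) * S tstar + α (I tstar) * (-(α (I tstar)) * I tstar * S tstar)
        - 0) * I tstar + (α (I tstar) * S tstar - Cstar) * 0) tstar :=
    (((hαI.mul hSt).sub (hasDerivAt_const _ _)).mul hI0)
  have hEq : deriv I =ᶠ[nhds tstar] fun t => (α (I t) * S t - Cstar) * I t :=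
    hI.mono fun t ht => ht.deriv
  have hdd : deriv (deriv I) tstar =
      α (I tstar) * (-(α (I tstar)) * I tstar * S tstar) * I tstar := by
    rw [hEq.deriv_eq, hg.deriv, hfac]
    ring
  have hSd : deriv S tstar = -(α (I tstar)) * I tstar * S tstar := hSt.deriv
  constructor
  · rw [hdd, hSd]; ring
  · rw [hdd]
    have h1 := hαpos (I tstar)
    nlinarith [mul_pos (mul_pos h1 hIstar) hSstar]
end
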